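/- The M'₄ kernel conserves the first moment on the integer lattice: for every x ∈ ℝ, the sum over all integers k of k · M'₄(x - k) equals x. -/

import Mathlib

/-!
Only the four lattice points ⌊x⌋ - 1, …, ⌊x⌋ + 2 lie within distance 2 of `x`. Writing
`x = ⌊x⌋ + t` with `t ∈ [0, 1)`, their weights are explicit cubics in `t`, and the resulting
four-term first moment is the polynomial identity `⌊x⌋ + t`.
-/

noncomputable def M4 (ρ : ℝ) : ℝ :=
  if |ρ| < 1 then 1 - (5 / 2) * ρ ^ 2 + (3 / 2) * |ρ| ^ 3
  else if |ρ| < 2 then (1 / 2) * (2 - |ρ|) ^ 2 * (1 - |ρ|)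
  else 0

theorem M4_eq_zero_of_two_le_abs {ρ : ℝ} (h : 2 ≤ |ρ|) : M4 ρ = 0 := by
  rw [M4, if_neg (by linarith), if_neg (by linarith)]

theorem M4_eq_of_abs_le_one {ρ : ℝ} (h : |ρ| ≤ 1) :
    M4 ρ = 1 - (5 / 2) * |ρ| ^ 2 + (3 / 2) * |ρ| ^ 3 := by
  rcases h.lt_or_eq with h | h
  · rw [M4, if_pos h, sq_abs]
  · rw [M4, if_neg h.not_lt, if_pos (by linarith), h]
    norm_num

theorem M4_eq_of_one_le_abs {ρ : ℝ} (h₁ : 1 ≤ |ρ|) (h₂ : |ρ| ≤ 2) :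
    M4 ρ = (1 / 2) * (2 - |ρ|) ^ 2 * (1 - |ρ|) := by
  rcases h₂.lt_or_eq with h₂ | h₂
  · rw [M4, if_neg h₁.not_gt, if_pos h₂]
  · rw [M4_eq_zero_of_two_le_abs h₂.ge, h₂]
    norm_num

theorem tsum_int_mul_shift_eq_sum_Icc {φ : ℝ → ℝ} (hφ : ∀ ρ, 2 ≤ |ρ| → φ ρ = 0)
    (c : ℤ → ℝ) (x : ℝ) :
    ∑' k : ℤ, c k * φ (x - k) = ∑ j ∈ Finset.Icc (-1 : ℤ) 2, c (⌊x⌋ + j) * φ (Int.fract x - j) := by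
  have hx (j : ℤ) : x - ((⌊x⌋ + j : ℤ) : ℝ) = Int.fract x - j := by
    rw [Int.fract]; push_cast; ring
  rw [← (Equiv.addLeft ⌊x⌋).tsum_eq]
  simp only [Equiv.coe_addLeft, hx]
  refine tsum_eq_sum fun j hj => ?_
  rw [hφ _ ?_, mul_zero]
  have := Int.fract_nonneg x
  have := Int.fract_lt_one x
  rw [Finset.mem_Icc, not_and_or, not_le, not_le] at hj
  rcases hj with hj | hj
  · have : (j : ℝ) ≤ -2 := by exact_mod_cast Int.le_sub_one_of_lt hj
    rw [abs_of_nonneg (by linarith)]; linarith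
  · have : (3 : ℝ) ≤ j := by exact_mod_cast hj
    rw [abs_of_nonpos (by linarith)]; linarith

theorem sum_Icc_mul_M4_eq (a : ℝ) {t : ℝ} (h₀ : 0 ≤ t) (h₁ : t ≤ 1) :
    ∑ j ∈ Finset.Icc (-1 : ℤ) 2, (a + j) * M4 (t - j) = a + t := by
  have abs_sub_neg_one : |t - (-1)| = t + 1 := by rw [abs_of_nonneg (by linarith)]; ring
  have abs_sub_zero : |t - 0| = t := by rw [sub_zero, abs_of_nonneg h₀]
  have abs_sub_one : |t - 1| = 1 - t := by rw [abs_of_nonpos (by linarith)]; ring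
  have abs_sub_two : |t - 2| = 2 - t := by rw [abs_of_nonpos (by linarith)]; ring
  rw [show Finset.Icc (-1 : ℤ) 2 = {-1, 0, 1, 2} by rfl]
  rw [Finset.sum_insert (by decide), Finset.sum_insert (by decide), Finset.sum_insert (by decide),
    Finset.sum_singleton]
  push_cast
  rw [M4_eq_of_one_le_abs (by linarith) (by linarith), M4_eq_of_abs_le_one (by linarith),
    M4_eq_of_abs_le_one (by linarith), M4_eq_of_one_le_abs (by linarith) (by linarith),
    abs_sub_neg_one, abs_sub_zero, abs_sub_one, abs_sub_two]
  ring

/-- The M'₄ kernel conserves the first moment on the integer lattice. -/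
theorem M4_first_moment (x : ℝ) : ∑' k : ℤ, (k : ℝ) * M4 (x - (k : ℝ)) = x := by
  rw [tsum_int_mul_shift_eq_sum_Icc (fun _ => M4_eq_zero_of_two_le_abs) (fun k => (k : ℝ))]
  push_cast
  conv_rhs => rw [← Int.floor_add_fract x]
  exact sum_Icc_mul_M4_eq _ (Int.fract_nonneg x) (Int.fract_lt_one x).le
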